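/- With Ψ^Q as above, the differential operator Ψ^Q(w) preserves the ideal I generated by Q in ℂ[z₁,…,zₙ]: for every polynomial f, Ψ^Q(w)(Q·f) lies in I. -/
import Mathlib

open MvPolynomial Matrix

/-- The quadratic form `Q = ∑ B_{ij} zᵢ zⱼ` as a polynomial. -/
noncomputable def Qpoly {n : ℕ} (B : Matrix (Fin n) (Fin n) ℂ) :
    MvPolynomial (Fin n) ℂ :=
  ∑ i, ∑ j, C (B i j) * X i * X j

/-- The shifted Euler operator `h = 2∑ zᵢ∂ᵢ + (n-2)` on polynomials. -/
noncomputable def hPoly {n : ℕ} (g : MvPolynomial (Fin n) ℂ) :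
    MvPolynomial (Fin n) ℂ :=
  2 * ∑ i, X i * pderiv i g + C ((n : ℂ) - 2) * g

/-- The Laplace-type operator `Box_Q = ∑ (B⁻¹)_{ij} ∂ᵢ∂ⱼ`. -/
noncomputable def boxPoly {n : ℕ} (B : Matrix (Fin n) (Fin n) ℂ)
    (g : MvPolynomial (Fin n) ℂ) : MvPolynomial (Fin n) ℂ :=
  ∑ i, ∑ j, C (B⁻¹ i j) * pderiv i (pderiv j g)

/-- The directional derivative `∂_w^Q` along `τ⁻¹(w) = B⁻¹w`. -/
noncomputable def dwPoly {n : ℕ} (B : Matrix (Fin n) (Fin n) ℂ) (w : Fin n → ℂ)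
    (g : MvPolynomial (Fin n) ℂ) : MvPolynomial (Fin n) ℂ :=
  ∑ j, C ((B⁻¹ *ᵥ w) j) * pderiv j g

/-- The linear polynomial associated with the covector `w`. -/
noncomputable def wPoly {n : ℕ} (w : Fin n → ℂ) : MvPolynomial (Fin n) ℂ :=
  ∑ i, C (w i) * X i

/-- The operator `Ψ^Q(w) = w·Box_Q − h∘∂_w^Q`. -/
noncomputable def PsiQ {n : ℕ} (B : Matrix (Fin n) (Fin n) ℂ) (w : Fin n → ℂ)
    (g : MvPolynomial (Fin n) ℂ) : MvPolynomial (Fin n) ℂ :=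
  wPoly w * boxPoly B g - hPoly (dwPoly B w g)


section Aux

variable {n : ℕ} (B : Matrix (Fin n) (Fin n) ℂ) (w : Fin n → ℂ)

/-- The Euler operator `∑ zᵢ∂ᵢ`. -/
noncomputable def Eop (g : MvPolynomial (Fin n) ℂ) : MvPolynomial (Fin n) ℂ :=
  ∑ i, X i * pderiv i g

lemma inv_entry_symm (hB : B.IsSymm) (i j : Fin n) : B⁻¹ i j = B⁻¹ j i := by
  have h : (B⁻¹)ᵀ = B⁻¹ := by rw [Matrix.transpose_nonsing_inv, hB.eq]
  exact (congrFun (congrFun h i) j).symm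

lemma invB_mul_entry (hdet : IsUnit B.det) (j k : Fin n) :
    ∑ i, B⁻¹ j i * B i k = if j = k then 1 else 0 := by
  have h := Matrix.nonsing_inv_mul B hdet
  have h2 := congrFun (congrFun h j) k
  simpa [Matrix.mul_apply, Matrix.one_apply] using h2

lemma B_mulVec_inv (hdet : IsUnit B.det) (i : Fin n) :
    ∑ j, B i j * (B⁻¹ *ᵥ w) j = w i := by
  have h : B *ᵥ (B⁻¹ *ᵥ w) = w := by
    rw [Matrix.mulVec_mulVec, Matrix.mul_nonsing_inv B hdet, Matrix.one_mulVec]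
  simpa [Matrix.mulVec, dotProduct] using congrFun h i

lemma sum_delta_X (k : Fin n) :
    ∑ m, C (if k = m then (1:ℂ) else 0) * X m = X k := by
  simp [apply_ite C, ite_mul]

lemma pderiv_Qpoly (hB : B.IsSymm) (k : Fin n) :
    pderiv k (Qpoly B) = C 2 * ∑ i, C (B k i) * X i := by
  have hs : ∀ i j, B j i = B i j := fun i j => (hB.apply j i).symm
  simp only [Qpoly, map_sum, pderiv_mul, pderiv_C_mul, pderiv_C, pderiv_X, Pi.single_apply,
    mul_ite, mul_one, mul_zero, ite_mul, zero_mul, zero_add, add_zero,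
    Finset.sum_add_distrib, Finset.sum_ite_irrel, Finset.sum_ite_eq, Finset.sum_ite_eq',
    Finset.mem_univ, if_true, Finset.sum_const_zero]
  rw [Finset.mul_sum, ← Finset.sum_add_distrib]
  refine Finset.sum_congr rfl fun i _ => ?_
  rw [hs i k, map_ofNat]
  ring

lemma pderiv_pderiv_Qpoly (hB : B.IsSymm) (i j : Fin n) :
    pderiv i (pderiv j (Qpoly B)) = C (2 * B j i) := by
  rw [pderiv_Qpoly B hB, pderiv_C_mul, map_sum]
  simp only [pderiv_C_mul, pderiv_X, Pi.single_apply, mul_ite, mul_one, mul_zero,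
    Finset.sum_ite_eq, Finset.sum_ite_eq', Finset.mem_univ, if_true]
  rw [C_mul]

lemma Eop_add (p q : MvPolynomial (Fin n) ℂ) : Eop (p + q) = Eop p + Eop q := by
  simp [Eop, mul_add, Finset.sum_add_distrib]

lemma Eop_C_mul (c : ℂ) (p : MvPolynomial (Fin n) ℂ) : Eop (C c * p) = C c * Eop p := by
  simp only [Eop, pderiv_C_mul, Finset.mul_sum]
  exact Finset.sum_congr rfl fun i _ => by ring

lemma Eop_mul (p q : MvPolynomial (Fin n) ℂ) : Eop (p * q) = Eop p * q + p * Eop q := by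
  simp only [Eop, pderiv_mul, mul_add, Finset.sum_add_distrib, Finset.sum_mul, Finset.mul_sum]
  congr 1
  · exact Finset.sum_congr rfl fun i _ => by ring
  · exact Finset.sum_congr rfl fun i _ => by ring

lemma Eop_Q (hB : B.IsSymm) : Eop (Qpoly B) = 2 * Qpoly B := by
  rw [Eop]
  have e : ∀ k : Fin n, X k * pderiv k (Qpoly B) = ∑ i, C (2 * B k i) * (X k * X i) := by
    intro k
    rw [pderiv_Qpoly B hB, Finset.mul_sum, Finset.mul_sum]
    exact Finset.sum_congr rfl fun i _ => by rw [C_mul]; ring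
  simp only [e]
  rw [Qpoly, Finset.mul_sum]
  refine Finset.sum_congr rfl fun k _ => ?_
  rw [Finset.mul_sum]
  refine Finset.sum_congr rfl fun i _ => ?_
  rw [C_mul, map_ofNat]
  ring

lemma Eop_w : Eop (wPoly w) = wPoly w := by
  simp only [Eop, wPoly, map_sum, pderiv_C_mul, pderiv_X, Pi.single_apply,
    mul_ite, mul_one, mul_zero, Finset.sum_ite_eq, Finset.sum_ite_eq',
    Finset.mem_univ, if_true]
  exact Finset.sum_congr rfl fun i _ => by ring

lemma hPoly_eq (g : MvPolynomial (Fin n) ℂ) :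
    hPoly g = 2 * Eop g + (C ((n : ℂ)) - 2) * g := by
  rw [hPoly, Eop, map_sub, map_ofNat]

lemma lin_comb (a : Fin n → ℂ) :
    ∑ j, C (a j) * (C 2 * ∑ m, C (B j m) * X m)
      = C 2 * ∑ m, C (∑ j, a j * B j m) * X m := by
  have e1 : ∀ j : Fin n, C (a j) * (C 2 * ∑ m, C (B j m) * X m)
      = ∑ m, C (a j * B j m) * (C 2 * X m) := by
    intro j
    rw [Finset.mul_sum, Finset.mul_sum]
    exact Finset.sum_congr rfl fun m _ => by rw [C_mul]; ring
  simp only [e1]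
  rw [Finset.sum_comm, Finset.mul_sum]
  refine Finset.sum_congr rfl fun m _ => ?_
  rw [map_sum, Finset.sum_mul, Finset.mul_sum]
  exact Finset.sum_congr rfl fun j _ => by ring

lemma key_collapse (hdet : IsUnit B.det) (g : Fin n → MvPolynomial (Fin n) ℂ) :
    ∑ i, ∑ j, C (B⁻¹ i j) * ((C 2 * ∑ m, C (B j m) * X m) * g i)
      = 2 * ∑ i, X i * g i := by
  rw [Finset.mul_sum]
  refine Finset.sum_congr rfl fun i _ => ?_
  have e : ∀ j : Fin n, C (B⁻¹ i j) * ((C 2 * ∑ m, C (B j m) * X m) * g i)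
      = (C (B⁻¹ i j) * (C 2 * ∑ m, C (B j m) * X m)) * g i := fun j => by ring
  simp only [e]
  rw [← Finset.sum_mul, lin_comb B (fun j => B⁻¹ i j)]
  simp only [invB_mul_entry B hdet]
  rw [sum_delta_X, map_ofNat]
  ring

lemma box_Q_mul (hB : B.IsSymm) (hdet : IsUnit B.det) (f : MvPolynomial (Fin n) ℂ) :
    boxPoly B (Qpoly B * f)
      = Qpoly B * boxPoly B f + 4 * Eop f + (2 * C ((n : ℂ))) * f := by
  have hexp : ∀ i j : Fin n, pderiv i (pderiv j (Qpoly B * f))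
      = C (2 * B j i) * f + (C 2 * ∑ m, C (B j m) * X m) * pderiv i f
        + (C 2 * ∑ m, C (B i m) * X m) * pderiv j f
        + Qpoly B * pderiv i (pderiv j f) := by
    intro i j
    rw [pderiv_mul, map_add, pderiv_mul, pderiv_mul, pderiv_pderiv_Qpoly B hB,
      pderiv_Qpoly B hB, pderiv_Qpoly B hB]
    ring
  rw [boxPoly]
  simp only [hexp, mul_add, Finset.sum_add_distrib]
  have h1 : ∑ i, ∑ j, C (B⁻¹ i j) * (C (2 * B j i) * f) = (2 * C ((n : ℂ))) * f := by
    have hsum : ∀ i : Fin n, ∑ j, C (B⁻¹ i j) * (C (2 * B j i) * f) = 2 * f := by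
      intro i
      have e : ∀ j : Fin n, C (B⁻¹ i j) * (C (2 * B j i) * f)
          = C (2 * (B⁻¹ i j * B j i)) * f := by
        intro j
        rw [C_mul, C_mul, C_mul]
        ring
      simp only [e]
      rw [← Finset.sum_mul, ← map_sum, ← Finset.mul_sum, invB_mul_entry B hdet i i,
        if_pos rfl, mul_one, map_ofNat]
    simp only [hsum]
    rw [Finset.sum_const, Finset.card_univ, Fintype.card_fin, nsmul_eq_mul,
      ← map_natCast (C : ℂ →+* MvPolynomial (Fin n) ℂ) n]
    ring
  have h2 : ∑ i, ∑ j, C (B⁻¹ i j) * ((C 2 * ∑ m, C (B j m) * X m) * pderiv i f)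
      = 2 * Eop f := key_collapse B hdet _
  have h3 : ∑ i, ∑ j, C (B⁻¹ i j) * ((C 2 * ∑ m, C (B i m) * X m) * pderiv j f)
      = 2 * Eop f := by
    rw [Finset.sum_comm]
    have e : ∀ j i : Fin n, C (B⁻¹ i j) * ((C 2 * ∑ m, C (B i m) * X m) * pderiv j f)
        = C (B⁻¹ j i) * ((C 2 * ∑ m, C (B i m) * X m) * pderiv j f) := by
      intro j i; rw [inv_entry_symm B hB]
    simp only [e]
    exact key_collapse B hdet _
  have h4 : ∑ i, ∑ j, C (B⁻¹ i j) * (Qpoly B * pderiv i (pderiv j f))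
      = Qpoly B * boxPoly B f := by
    rw [boxPoly, Finset.mul_sum]
    refine Finset.sum_congr rfl fun i _ => ?_
    rw [Finset.mul_sum]
    exact Finset.sum_congr rfl fun j _ => by ring
  rw [h1, h2, h3, h4]
  ring

lemma dw_Q_mul (hB : B.IsSymm) (hdet : IsUnit B.det) (f : MvPolynomial (Fin n) ℂ) :
    dwPoly B w (Qpoly B * f) = Qpoly B * dwPoly B w f + 2 * (wPoly w * f) := by
  have hA : ∀ j : Fin n, pderiv j (Qpoly B * f)
      = pderiv j (Qpoly B) * f + Qpoly B * pderiv j f := fun j => pderiv_mul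
  rw [dwPoly]
  simp only [hA, mul_add, Finset.sum_add_distrib]
  have h1 : ∑ j, C ((B⁻¹ *ᵥ w) j) * (pderiv j (Qpoly B) * f) = 2 * (wPoly w * f) := by
    simp only [pderiv_Qpoly B hB]
    have e : ∀ j : Fin n, C ((B⁻¹ *ᵥ w) j) * ((C 2 * ∑ m, C (B j m) * X m) * f)
        = (C ((B⁻¹ *ᵥ w) j) * (C 2 * ∑ m, C (B j m) * X m)) * f := fun j => by ring
    simp only [e]
    rw [← Finset.sum_mul, lin_comb B (fun j => (B⁻¹ *ᵥ w) j)]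
    have e2 : ∀ m : Fin n, (∑ j, (B⁻¹ *ᵥ w) j * B j m) = w m := by
      intro m
      rw [← B_mulVec_inv B w hdet m]
      refine Finset.sum_congr rfl fun j _ => ?_
      rw [mul_comm, hB.apply m j]
    simp only [e2]
    rw [map_ofNat, wPoly]
    ring
  have h2 : ∑ j, C ((B⁻¹ *ᵥ w) j) * (Qpoly B * pderiv j f) = Qpoly B * dwPoly B w f := by
    rw [dwPoly, Finset.mul_sum]
    exact Finset.sum_congr rfl fun j _ => by ring
  rw [h1, h2, add_comm]

end Aux

/-- `Ψ^Q(w)` preserves the ideal generated by `Q`: for every polynomial `f`,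
`Ψ^Q(w)(Q·f)` lies in `(Q)`. -/
theorem PsiQ_preserves_ideal (n : ℕ) (B : Matrix (Fin n) (Fin n) ℂ)
    (hB : B.IsSymm) (hdet : IsUnit B.det) (w : Fin n → ℂ)
    (f : MvPolynomial (Fin n) ℂ) :
    PsiQ B w (Qpoly B * f) ∈ Ideal.span {Qpoly B} := by
  rw [Ideal.mem_span_singleton]
  refine ⟨wPoly w * boxPoly B f - 2 * Eop (dwPoly B w f)
    - (C ((n : ℂ)) + 2) * dwPoly B w f, ?_⟩
  rw [PsiQ, box_Q_mul B hB hdet f, dw_Q_mul B w hB hdet f, hPoly_eq, Eop_add,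
    Eop_mul, Eop_Q B hB]
  have h2 : Eop (2 * (wPoly w * f)) = 2 * (wPoly w * Eop f + wPoly w * f) := by
    have h22 : (2 : MvPolynomial (Fin n) ℂ) = C 2 := by rw [map_ofNat]
    rw [h22, Eop_C_mul, Eop_mul, Eop_w]
    ring
  rw [h2]
  ring
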